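/- Let $f_0$ be the density of Student's $t$ distribution with $d_0$ degrees of freedom and $f_1(x)=g_{d_1}(x-C)$ where $g_{d_1}$ is the Student $t_{d_1}$ density and $C>0$. If $d_0>d_1$ then $\lim_{x\to\infty} f_1(x)/f_0(x)=\infty$; if $1\le d_0\le d_1$ then $\limsup_{x\to\infty} f_1(x)/f_0(x)<\infty$. -/

import Mathlib

open Filter Real Topology

/-- Student's t density with `d` degrees of freedom. -/
noncomputable def studentDensity (d : ℝ) (x : ℝ) : ℝ :=
  (Real.Gamma ((d + 1) / 2) / (Real.sqrt (d * Real.pi) * Real.Gamma (d / 2)))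
    * (1 + x ^ 2 / d) ^ (-((d + 1) / 2))

/-!
Every shifted `t_d` density has a polynomial tail: `g_d(x - c) · x^(d+1)` tends to a positive
constant as `x → ∞`, whatever the shift `c`. Hence `f₁/f₀` is, up to a factor tending to a positive
constant, `x^(d₀ - d₁)`, which tends to `∞` when `d₀ > d₁` and stays at most `1` when `d₀ ≤ d₁`.
-/

noncomputable def studentNormalizer (d : ℝ) : ℝ :=
  Gamma ((d + 1) / 2) / (sqrt (d * π) * Gamma (d / 2))

lemma studentDensity_eq (d x : ℝ) :
    studentDensity d x = studentNormalizer d * (1 + x ^ 2 / d) ^ (-((d + 1) / 2)) :=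
  rfl

lemma studentNormalizer_pos {d : ℝ} (hd : 0 < d) : 0 < studentNormalizer d :=
  div_pos (Gamma_pos_of_pos (by linarith))
    (mul_pos (sqrt_pos.2 (by positivity)) (Gamma_pos_of_pos (by positivity)))

lemma tendsto_one_add_sub_sq_div_div_sq (d c : ℝ) :
    Tendsto (fun x => (1 + (x - c) ^ 2 / d) / x ^ 2) atTop (𝓝 d⁻¹) := by
  have hlim : Tendsto (fun x : ℝ => x⁻¹ ^ 2 + (1 - c * x⁻¹) ^ 2 / d) atTop
      (𝓝 (0 ^ 2 + (1 - c * 0) ^ 2 / d)) :=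
    (tendsto_inv_atTop_zero.pow 2).add
      (((tendsto_const_nhds.sub (tendsto_inv_atTop_zero.const_mul c)).pow 2).div_const d)
  rw [show (0 : ℝ) ^ 2 + (1 - c * 0) ^ 2 / d = d⁻¹ by ring] at hlim
  refine hlim.congr' ?_
  filter_upwards [eventually_ne_atTop 0] with x hx
  field_simp

lemma studentDensity_sub_mul_rpow {d x : ℝ} (hd : 0 < d) (c : ℝ) (hx : 0 < x) :
    studentDensity d (x - c) * x ^ (d + 1)
      = studentNormalizer d * ((1 + (x - c) ^ 2 / d) / x ^ 2) ^ (-((d + 1) / 2)) := by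
  have hx2 : x ^ (d + 1) = ((x ^ 2) ^ (-((d + 1) / 2)))⁻¹ := by
    rw [← rpow_natCast_mul hx.le, ← rpow_neg hx.le]; ring_nf
  rw [studentDensity_eq, div_rpow (by positivity) (by positivity), hx2]
  ring

lemma tendsto_studentDensity_sub_mul_rpow {d : ℝ} (hd : 0 < d) (c : ℝ) :
    Tendsto (fun x => studentDensity d (x - c) * x ^ (d + 1)) atTop
      (𝓝 (studentNormalizer d * d ^ ((d + 1) / 2))) := by
  have hlim := ((tendsto_one_add_sub_sq_div_div_sq d c).rpow_const
    (p := -((d + 1) / 2)) (Or.inl (inv_ne_zero hd.ne'))).const_mul (studentNormalizer d)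
  rw [inv_rpow hd.le, rpow_neg hd.le, inv_inv] at hlim
  refine hlim.congr' ?_
  filter_upwards [eventually_gt_atTop 0] with x hx
  exact (studentDensity_sub_mul_rpow hd c hx).symm

theorem student_density_ratio_general
    (d₀ d₁ C : ℝ) (hd₀ : 0 < d₀) (hd₁ : 0 < d₁)
    (f₀ f₁ : ℝ → ℝ)
    (hf₀ : f₀ = fun x => studentDensity d₀ x)
    (hf₁ : f₁ = fun x => studentDensity d₁ (x - C)) :
    (d₁ < d₀ → Tendsto (fun x => f₁ x / f₀ x) atTop atTop) ∧
    (1 ≤ d₀ → d₀ ≤ d₁ → ∃ M : ℝ, ∀ᶠ x in atTop, f₁ x / f₀ x ≤ M) := by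
  set g : ℝ → ℝ := fun x => f₁ x * x ^ (d₁ + 1) / (f₀ x * x ^ (d₀ + 1)) with hg
  set L₀ := studentNormalizer d₀ * d₀ ^ ((d₀ + 1) / 2)
  set L₁ := studentNormalizer d₁ * d₁ ^ ((d₁ + 1) / 2)
  have hL₀ : 0 < L₀ := mul_pos (studentNormalizer_pos hd₀) (by positivity)
  have hL₁ : 0 < L₁ := mul_pos (studentNormalizer_pos hd₁) (by positivity)
  have hgL : Tendsto g atTop (𝓝 (L₁ / L₀)) := by
    subst hf₀ hf₁
    refine (tendsto_studentDensity_sub_mul_rpow hd₁ C).div ?_ hL₀.ne'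
    simpa using tendsto_studentDensity_sub_mul_rpow hd₀ 0
  have hratio : ∀ᶠ x in atTop, g x * x ^ (d₀ - d₁) = f₁ x / f₀ x := by
    filter_upwards [eventually_gt_atTop 0] with x hx
    simp only [hg]
    rw [mul_div_mul_comm, mul_assoc, ← rpow_sub hx, ← rpow_add hx,
      show d₁ + 1 - (d₀ + 1) + (d₀ - d₁) = 0 by ring, rpow_zero, mul_one]
  constructor
  · intro hlt
    exact (hgL.pos_mul_atTop (div_pos hL₁ hL₀) (tendsto_rpow_atTop (sub_pos.2 hlt))).congr' hratio
  · intro _ hle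
    refine ⟨L₁ / L₀ + 1, ?_⟩
    filter_upwards [hratio, hgL.eventually (gt_mem_nhds (lt_add_one _)),
      hgL.eventually (lt_mem_nhds (div_pos hL₁ hL₀)), eventually_ge_atTop 1] with x hx hgx hgx' hx1
    rw [← hx]
    exact (mul_le_of_le_one_right hgx'.le
      (rpow_le_one_of_one_le_of_nonpos hx1 (sub_nonpos.2 hle))).trans hgx.le

/-- Density-ratio condition of Corollary 4.2: with `f₀` the `t_{d₀}` density and
`f₁(x) = g_{d₁}(x - C)` for `C > 0`: if `d₀ > d₁` then `f₁(x)/f₀(x) → ∞` as `x → ∞`;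
if `1 ≤ d₀ ≤ d₁` then the limsup of `f₁/f₀` at `∞` is finite. -/
theorem student_density_ratio
    (d₀ d₁ C : ℝ) (hd₀ : 0 < d₀) (hd₁ : 0 < d₁) (hC : 0 < C)
    (f₀ f₁ : ℝ → ℝ)
    (hf₀ : f₀ = fun x => studentDensity d₀ x)
    (hf₁ : f₁ = fun x => studentDensity d₁ (x - C)) :
    (d₁ < d₀ → Tendsto (fun x => f₁ x / f₀ x) atTop atTop) ∧
    (1 ≤ d₀ → d₀ ≤ d₁ → ∃ M : ℝ, ∀ᶠ x in atTop, f₁ x / f₀ x ≤ M) :=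
  student_density_ratio_general d₀ d₁ C hd₀ hd₁ f₀ f₁ hf₀ hf₁
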